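/- arXiv:1902.00436 — 9 statements merged into one kernel-verified Lean document; each statement's English description precedes it below -/
import Mathlib

section
/- For the damped harmonic oscillator contact integrator defined by x_{j+1} = (1 - h^2/2) x_j + h(1 - h α) p_j and p_{j+1} = (1 - h α) p_j - (h/2)(x_{j+1} + x_j), the resulting sequence x satisfies the second-order difference equation (x_{j+1} - 2x_j + x_{j-1})/h^2 = -x_j - α((x_j - x_{j-1})/h - (h/2) x_j). -/
/-- The momentum eliminated: `h (1 - hα) p (k+1)` is expanded by the `p`-update, and the
resulting `h (1 - hα) p k` is read off the `x`-update at step `k`. -/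
lemma contact_integrator_x_add_two {h α : ℝ} {x p : ℕ → ℝ}
    (hx : ∀ j : ℕ, x (j + 1) = (1 - h ^ 2 / 2) * x j + h * (1 - h * α) * p j)
    (hp : ∀ j : ℕ, p (j + 1) = (1 - h * α) * p j - h / 2 * (x (j + 1) + x j)) (k : ℕ) :
    x (k + 2) = (2 - h ^ 2 + h ^ 3 * α / 2 - h * α) * x (k + 1) - (1 - h * α) * x k := by
  linear_combination hx (k + 1) + h * (1 - h * α) * hp k - (1 - h * α) * hx k

/-- The position-momentum formulation of the first-order contact
integrator for the damped harmonic oscillator satisfies the second-order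
difference equation. -/
theorem stmt0 (h α : ℝ) (hh : 0 < h) (x p : ℕ → ℝ)
    (hx : ∀ j : ℕ, x (j + 1) = (1 - h ^ 2 / 2) * x j + h * (1 - h * α) * p j)
    (hp : ∀ j : ℕ, p (j + 1) = (1 - h * α) * p j - h / 2 * (x (j + 1) + x j)) :
    ∀ j : ℕ, 1 ≤ j →
      (x (j + 1) - 2 * x j + x (j - 1)) / h ^ 2 =
        -x j - α * ((x j - x (j - 1)) / h - h / 2 * x j) := by
  intro j hj
  obtain ⟨k, rfl⟩ := Nat.exists_eq_add_of_le' hj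
  have hh₀ : h ≠ 0 := hh.ne'
  rw [Nat.add_sub_cancel, contact_integrator_x_add_two hx hp]
  field_simp
  ring
end

section
/- If x : [0,T] → ℝⁿ is twice differentiable, z satisfies ż = L(x, ẋ, z) for a time-independent C¹ Lagrangian L, and x satisfies the generalized Euler-Lagrange equations ∂L/∂x - d/dt(∂L/∂ẋ) + (∂L/∂z)(∂L/∂ẋ) = 0, then the energy E(t) = (∂L/∂ẋ)(x,ẋ,z)·ẋ - L(x,ẋ,z) satisfies Ė = (∂L/∂z) E. -/
/-!
Write `p = ∂L/∂ẋ` along the curve, so `E = p·ẋ - L`. By the product rule `Ė = ṗ·ẋ + p·ẍ - dL(ẋ, ẍ, ż)`.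
The Euler–Lagrange equation in direction `ẋ` gives `ṗ·ẋ = L_x·ẋ + L_z (p·ẋ)`, and `ż = L` makes the
`z`-part of `dL` equal to `L_z L`; everything cancels except `L_z (p·ẋ - L)`.

The product rule needs `ṗ` only in the fixed direction `ẋ(t)`: the remainder `p(s)·(ẋ(s) - ẋ(t))`
is handled by continuity of `s ↦ p(s)`, which holds because `L` is `C¹`.
-/

theorem HasDerivAt.clm_apply_of_continuousAt {E F : Type*}
    [NormedAddCommGroup E] [NormedSpace ℝ E] [NormedAddCommGroup F] [NormedSpace ℝ F]
    {P : ℝ → E →L[ℝ] F} {v : ℝ → E} {v' : E} {d : F} {t : ℝ}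
    (hPc : ContinuousAt P t) (hP : HasDerivAt (fun s => P s (v t)) d t)
    (hv : HasDerivAt v v' t) :
    HasDerivAt (fun s => P s (v s)) (d + P t v') t := by
  have hrem : HasDerivAt (fun s => P s (v s - v t)) (P t v') t := by
    rw [hasDerivAt_iff_tendsto_slope]
    have hslope : slope (fun s => P s (v s - v t)) t = fun s => P s (slope v t s) := by
      funext s
      simp [slope_def_module, map_smul]
    rw [hslope]
    exact (isBoundedBilinearMap_apply.continuous.tendsto (P t, v')).comp
      ((hPc.tendsto.mono_left nhdsWithin_le_nhds).prodMk_nhds (hasDerivAt_iff_tendsto_slope.mp hv))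
  convert hP.add hrem using 1
  funext s
  simp

theorem map_prod_prod_eq_add_add_smul {R M₁ M₂ F G : Type*} [Semiring R]
    [AddCommMonoid M₁] [Module R M₁] [AddCommMonoid M₂] [Module R M₂]
    [AddCommMonoid F] [Module R F] [FunLike G (M₁ × M₂ × R) F] [LinearMapClass G R _ F]
    (T : G) (a : M₁) (b : M₂) (c : R) :
    T (a, b, c) = T (a, 0, 0) + T (0, b, 0) + c • T (0, 0, 1) := by
  rw [← map_smul, ← map_add, ← map_add]
  simp

/-- Along solutions of the generalized Euler-Lagrange equations
of Herglotz' variational principle for a time-independent C¹ Lagrangian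
`L : ℝⁿ × ℝⁿ × ℝ → ℝ`, the energy `E = ∂L/∂ẋ · ẋ - L` satisfies
`Ė = (∂L/∂z) E`.  Partial derivatives in the `x`- and `ẋ`-slots are expressed
directionally via the Fréchet derivative; `D t u` is the time derivative of
`t ↦ (∂L/∂ẋ)(x t, ẋ t, z t) · u`. -/
theorem stmt2 (n : ℕ)
    (L : EuclideanSpace ℝ (Fin n) × EuclideanSpace ℝ (Fin n) × ℝ → ℝ)
    (hL : ContDiff ℝ 1 L)
    (x x' x'' : ℝ → EuclideanSpace ℝ (Fin n)) (z : ℝ → ℝ)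
    (hx : ∀ t, HasDerivAt x (x' t) t)
    (hx' : ∀ t, HasDerivAt x' (x'' t) t)
    (hz : ∀ t, HasDerivAt z (L (x t, x' t, z t)) t)
    (D : ℝ → EuclideanSpace ℝ (Fin n) → ℝ)
    (hD : ∀ (u : EuclideanSpace ℝ (Fin n)) (t : ℝ),
      HasDerivAt (fun s => fderiv ℝ L (x s, x' s, z s)
        ((0 : EuclideanSpace ℝ (Fin n)), u, (0 : ℝ))) (D t u) t)
    (hEL : ∀ (u : EuclideanSpace ℝ (Fin n)) (t : ℝ),
      fderiv ℝ L (x t, x' t, z t) (u, (0 : EuclideanSpace ℝ (Fin n)), (0 : ℝ))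
        - D t u
        + fderiv ℝ L (x t, x' t, z t)
            ((0 : EuclideanSpace ℝ (Fin n)), (0 : EuclideanSpace ℝ (Fin n)), (1 : ℝ))
          * fderiv ℝ L (x t, x' t, z t)
            ((0 : EuclideanSpace ℝ (Fin n)), u, (0 : ℝ)) = 0)
    (t : ℝ) :
    HasDerivAt
      (fun s => fderiv ℝ L (x s, x' s, z s)
          ((0 : EuclideanSpace ℝ (Fin n)), x' s, (0 : ℝ)) - L (x s, x' s, z s))
      (fderiv ℝ L (x t, x' t, z t)
          ((0 : EuclideanSpace ℝ (Fin n)), (0 : EuclideanSpace ℝ (Fin n)), (1 : ℝ))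
        * (fderiv ℝ L (x t, x' t, z t)
            ((0 : EuclideanSpace ℝ (Fin n)), x' t, (0 : ℝ)) - L (x t, x' t, z t))) t := by
  have hγ : HasDerivAt (fun s => (x s, x' s, z s)) (x' t, x'' t, L (x t, x' t, z t)) t :=
    (hx t).prodMk ((hx' t).prodMk (hz t))
  have hLγ : HasDerivAt (fun s => L (x s, x' s, z s))
      (fderiv ℝ L (x t, x' t, z t) (x' t, x'' t, L (x t, x' t, z t))) t :=
    (hL.differentiable one_ne_zero _).hasFDerivAt.comp_hasDerivAt t hγ
  have hmomentum : HasDerivAt (fun s => fderiv ℝ L (x s, x' s, z s) (0, x' s, 0))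
      (D t (x' t) + fderiv ℝ L (x t, x' t, z t) (0, x'' t, 0)) t :=
    (hD (x' t) t).clm_apply_of_continuousAt
      ((hL.continuous_fderiv one_ne_zero).continuousAt.comp hγ.continuousAt)
      ((hasDerivAt_const t 0).prodMk ((hx' t).prodMk (hasDerivAt_const t 0)))
  refine (hmomentum.sub hLγ).congr_deriv ?_
  rw [map_prod_prod_eq_add_add_smul _ (x' t), smul_eq_mul]
  linear_combination -hEL (x' t) t
end

section
/- Let L : ℝ² × ℝ² → ℝ be C¹ and h > 0 small enough that 1 - h D₄L ≠ 0 along the trajectory. A discrete curve (x_j, z_j) satisfying z_{j+1} - z_j = h L(x_j, x_{j+1}, z_j, z_{j+1}) satisfies the discrete Herglotz criticality condition ∂z_{j+1}/∂x_j = 0 for all interior j if and only if D₁L(x_j,x_{j+1},z_j,z_{j+1}) + D₂L(x_{j-1},x_j,z_{j-1},z_j) · (1 + h D₃L(x_j,x_{j+1},z_j,z_{j+1}))/(1 - h D₄L(x_{j-1},x_j,z_{j-1},z_j)) = 0. -/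
/-!
Differentiating the two step relations `z_j - z_{j-1} = h L(x_{j-1}, x_j, z_{j-1}, z_j)` and
`z_{j+1} - z_j = h L(x_j, x_{j+1}, z_j, z_{j+1})` in `x_j` gives a triangular linear system for
`∂z_j/∂x_j` and `∂z_{j+1}/∂x_j`. Eliminating `∂z_j/∂x_j` yields
`(1 - h D₄L(x_j, x_{j+1}, z_j, z_{j+1})) ∂z_{j+1}/∂x_j = h · EL`, where `EL` is the
left-hand side of the Euler–Lagrange equation; since `h ≠ 0` and the factor on the left is
nonzero, `∂z_{j+1}/∂x_j = 0 ↔ EL = 0`.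
-/

theorem ContinuousLinearMap.apply_prod4 {𝕜 M : Type*} [Semiring 𝕜] [AddCommMonoid M]
    [Module 𝕜 M] [TopologicalSpace 𝕜] [TopologicalSpace M] (A : 𝕜 × 𝕜 × 𝕜 × 𝕜 →L[𝕜] M)
    (a b c d : 𝕜) :
    A (a, b, c, d) = a • A (1, 0, 0, 0) + b • A (0, 1, 0, 0) + c • A (0, 0, 1, 0)
      + d • A (0, 0, 0, 1) := by
  have : ((a, b, c, d) : 𝕜 × 𝕜 × 𝕜 × 𝕜)
      = a • (1, 0, 0, 0) + b • (0, 1, 0, 0) + c • (0, 0, 1, 0) + d • (0, 0, 0, 1) := by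
    simp
  rw [this, map_add, map_add, map_add, map_smul, map_smul, map_smul, map_smul]

theorem HasDerivAt.eq_mul_fderiv_of_eq_mul_comp {E : Type*} [NormedAddCommGroup E]
    [NormedSpace ℝ E] {L : E → ℝ} {φ : ℝ → E} {φ' : E} {f : ℝ → ℝ} {f' c x : ℝ}
    (hf : HasDerivAt f f' x) (hφ : HasDerivAt φ φ' x) (hL : DifferentiableAt ℝ L (φ x))
    (hrel : ∀ s, f s = c * L (φ s)) :
    f' = c * fderiv ℝ L (φ x) φ' := by
  have hcomp := (hL.hasFDerivAt.comp_hasDerivAt x hφ).const_mul c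
  rw [show (fun s => c * (L ∘ φ) s) = f from (funext hrel).symm] at hcomp
  exact hf.unique hcomp

theorem eq_zero_iff_of_herglotz_system {h a b c d e u v : ℝ} (hh : h ≠ 0)
    (hb : 1 - h * b ≠ 0) (he : 1 - h * e ≠ 0)
    (hu : u * (1 - h * b) = h * a) (hv : v * (1 - h * e) = h * c + u * (1 + h * d)) :
    v = 0 ↔ c + a * (1 + h * d) / (1 - h * b) = 0 := by
  rw [show c + a * (1 + h * d) / (1 - h * b) = (c * (1 - h * b) + a * (1 + h * d)) / (1 - h * b)
    by field_simp, div_eq_zero_iff, or_iff_left hb]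
  have hprod : h * (c * (1 - h * b) + a * (1 + h * d)) = v * ((1 - h * e) * (1 - h * b)) := by
    linear_combination -(1 - h * b) * hv - (1 + h * d) * hu
  constructor
  · intro hv0
    simpa [hv0, hh] using hprod
  · intro hK
    simpa [hK, he, hb] using hprod.symm

/-- Here `ζ s` and `ζ' s` are `z_j` and `z_{j+1}` as functions of `x_j = s`, with
`x_{j-1} = xm`, `x_{j+1} = xp`, `z_{j-1} = zm` fixed, and `DᵢL` is `fderiv ℝ L` applied to the
`i`-th standard basis vector of `ℝ⁴`. -/
theorem stmt6 (L : ℝ × ℝ × ℝ × ℝ → ℝ) (hL : ContDiff ℝ 1 L)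
    (h : ℝ) (hh : 0 < h) (xm x xp zm : ℝ)
    (ζ ζ' : ℝ → ℝ) (dζ dζ' : ℝ)
    (hζrec : ∀ s, ζ s - zm = h * L (xm, s, zm, ζ s))
    (hζ'rec : ∀ s, ζ' s - ζ s = h * L (s, xp, ζ s, ζ' s))
    (hdζ : HasDerivAt ζ dζ x) (hdζ' : HasDerivAt ζ' dζ' x)
    (hden1 : 1 - h * fderiv ℝ L (xm, x, zm, ζ x) (0, 0, 0, 1) ≠ 0)
    (hden2 : 1 - h * fderiv ℝ L (x, xp, ζ x, ζ' x) (0, 0, 0, 1) ≠ 0) :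
    dζ' = 0 ↔
      fderiv ℝ L (x, xp, ζ x, ζ' x) (1, 0, 0, 0)
        + fderiv ℝ L (xm, x, zm, ζ x) (0, 1, 0, 0)
          * (1 + h * fderiv ℝ L (x, xp, ζ x, ζ' x) (0, 0, 1, 0))
          / (1 - h * fderiv ℝ L (xm, x, zm, ζ x) (0, 0, 0, 1)) = 0 := by
  have hdiff : Differentiable ℝ L := hL.differentiable one_ne_zero
  have step1 := (hdζ.sub_const zm).eq_mul_fderiv_of_eq_mul_comp
    ((hasDerivAt_const x xm).prodMk ((hasDerivAt_id x).prodMk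
      ((hasDerivAt_const x zm).prodMk hdζ))) (hdiff _) hζrec
  have step2 := (hdζ'.sub hdζ).eq_mul_fderiv_of_eq_mul_comp
    ((hasDerivAt_id x).prodMk ((hasDerivAt_const x xp).prodMk (hdζ.prodMk hdζ')))
    (hdiff _) hζ'rec
  rw [ContinuousLinearMap.apply_prod4] at step1 step2
  simp only [smul_eq_mul, id_eq] at step1 step2
  exact eq_zero_iff_of_herglotz_system (u := dζ) hh.ne' hden1 hden2
    (by linear_combination step1) (by linear_combination step2)
end

section
/- Suppose a discrete curve (x_j, z_j) satisfies z_{j+1} - z_j = h L(x_j, x_{j+1}, z_j, z_{j+1}) and the discrete generalized Euler-Lagrange equations. Define p_j = h D₂L(x_{j-1},x_j,z_{j-1},z_j)/(1 - h D₄L(x_{j-1},x_j,z_{j-1},z_j)). Then dz_{j+1} - p_{j+1} dx_{j+1} = λ_j (dz_j - p_j dx_j), where λ_j = (1 + h D₃L(x_j,x_{j+1},z_j,z_{j+1}))/(1 - h D₄L(x_j,x_{j+1},z_j,z_{j+1})). In particular, the discrete flow map (x_j, p_j, z_j) ↦ (x_{j+1}, p_{j+1}, z_{j+1}) is a contact transformation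 for the 1-form dz - p dx. -/
/-!
Differentiating the step relation `z_{j+1} - z_j = h L(x_j, x_{j+1}, z_j, z_{j+1})` along the
family gives `(1 - h D₄L) δz_{j+1} - h D₂L δx_{j+1} = (1 + h D₃L) δz_j + h D₁L δx_j`, and the
discrete Euler–Lagrange equation, multiplied by `h`, says exactly `h D₁L = -(1 + h D₃L) p_j`.
Dividing by `1 - h D₄L` yields the conformal transformation law of `dz - p dx`.
-/

theorem ContinuousLinearMap.map_prod4 {M : Type*} [AddCommGroup M] [Module ℝ M]
    [TopologicalSpace M] (f : ℝ × ℝ × ℝ × ℝ →L[ℝ] M) (x₁ x₂ x₃ x₄ : ℝ) :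
    f (x₁, x₂, x₃, x₄) = x₁ • f (1, 0, 0, 0) + x₂ • f (0, 1, 0, 0)
      + x₃ • f (0, 0, 1, 0) + x₄ • f (0, 0, 0, 1) := by
  have hdec : ((x₁, x₂, x₃, x₄) : ℝ × ℝ × ℝ × ℝ) = x₁ • ((1 : ℝ), (0 : ℝ), (0 : ℝ), (0 : ℝ))
      + x₂ • (0, 1, 0, 0) + x₃ • (0, 0, 1, 0) + x₄ • (0, 0, 0, 1) := by
    simp
  rw [hdec]
  simp only [map_add, map_smul]

theorem HasDerivAt.sub_eq_of_discrete_step {L : ℝ × ℝ × ℝ × ℝ → ℝ} {h : ℝ}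
    {a b u v : ℝ → ℝ} {s0 δa δb δu δv : ℝ}
    (hL : DifferentiableAt ℝ L (a s0, b s0, u s0, v s0))
    (hrec : ∀ s, v s - u s = h * L (a s, b s, u s, v s))
    (hda : HasDerivAt a δa s0) (hdb : HasDerivAt b δb s0)
    (hdu : HasDerivAt u δu s0) (hdv : HasDerivAt v δv s0) :
    δv - δu = h * fderiv ℝ L (a s0, b s0, u s0, v s0) (δa, δb, δu, δv) := by
  have hcurve : HasDerivAt (fun s => (a s, b s, u s, v s)) (δa, δb, δu, δv) s0 :=
    hda.prodMk (hdb.prodMk (hdu.prodMk hdv))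
  have hrhs : HasDerivAt (fun s => h * L (a s, b s, u s, v s))
      (h * fderiv ℝ L (a s0, b s0, u s0, v s0) (δa, δb, δu, δv)) s0 :=
    (hL.hasFDerivAt.comp_hasDerivAt s0 hcurve).const_mul h
  rw [show (fun s => h * L (a s, b s, u s, v s)) = fun s => v s - u s from
    funext fun s => (hrec s).symm] at hrhs
  exact (hdv.sub hdu).unique hrhs

theorem stmt7_general (L : ℝ × ℝ × ℝ × ℝ → ℝ) (hL : ContDiff ℝ 1 L)
    (h : ℝ) (x0 z0 : ℝ)
    (a b u v : ℝ → ℝ) (s0 δa δb δu δv : ℝ)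
    (hrec : ∀ s, v s - u s = h * L (a s, b s, u s, v s))
    (hda : HasDerivAt a δa s0) (hdb : HasDerivAt b δb s0)
    (hdu : HasDerivAt u δu s0) (hdv : HasDerivAt v δv s0)
    (hden1 : 1 - h * fderiv ℝ L (a s0, b s0, u s0, v s0) (0, 0, 0, 1) ≠ 0)
    (hEL : fderiv ℝ L (a s0, b s0, u s0, v s0) (1, 0, 0, 0)
        + fderiv ℝ L (x0, a s0, z0, u s0) (0, 1, 0, 0)
          * (1 + h * fderiv ℝ L (a s0, b s0, u s0, v s0) (0, 0, 1, 0))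
          / (1 - h * fderiv ℝ L (x0, a s0, z0, u s0) (0, 0, 0, 1)) = 0) :
    δv - (h * fderiv ℝ L (a s0, b s0, u s0, v s0) (0, 1, 0, 0)
            / (1 - h * fderiv ℝ L (a s0, b s0, u s0, v s0) (0, 0, 0, 1))) * δb
      = ((1 + h * fderiv ℝ L (a s0, b s0, u s0, v s0) (0, 0, 1, 0))
            / (1 - h * fderiv ℝ L (a s0, b s0, u s0, v s0) (0, 0, 0, 1)))
        * (δu - (h * fderiv ℝ L (x0, a s0, z0, u s0) (0, 1, 0, 0)
            / (1 - h * fderiv ℝ L (x0, a s0, z0, u s0) (0, 0, 0, 1))) * δa) := by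
  have hstep := HasDerivAt.sub_eq_of_discrete_step
    (hL.differentiable one_ne_zero _) hrec hda hdb hdu hdv
  rw [ContinuousLinearMap.map_prod4] at hstep
  simp only [smul_eq_mul] at hstep
  set p := h * fderiv ℝ L (x0, a s0, z0, u s0) (0, 1, 0, 0)
    / (1 - h * fderiv ℝ L (x0, a s0, z0, u s0) (0, 0, 0, 1)) with hp
  have hELp : h * fderiv ℝ L (a s0, b s0, u s0, v s0) (1, 0, 0, 0)
      + p * (1 + h * fderiv ℝ L (a s0, b s0, u s0, v s0) (0, 0, 1, 0)) = 0 := by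
    rw [hp]; linear_combination h * hEL
  clear_value p
  field_simp
  linear_combination hstep + δa * hELp

/-- the discrete contact flow is a contact transformation.
Consider a one-parameter family of discrete solutions: `a s = x_j(s)`,
`b s = x_{j+1}(s)`, `u s = z_j(s)`, `v s = z_{j+1}(s)` with
`z_{j+1} - z_j = h L(x_j, x_{j+1}, z_j, z_{j+1})`, the previous step having
values `x0 = x_{j-1}`, `z0 = z_{j-1}` at the base parameter `s0`, and the
discrete generalized Euler-Lagrange equation holding at `s0`.  Then the
variations (differentials) satisfy
`δz_{j+1} - p_{j+1} δx_{j+1} = λ_j (δz_j - p_j δx_j)` with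
`p_k = h D₂L/(1 - h D₄L)` and `λ_j = (1 + h D₃L)/(1 - h D₄L)`. -/
theorem stmt7 (L : ℝ × ℝ × ℝ × ℝ → ℝ) (hL : ContDiff ℝ 1 L)
    (h : ℝ) (hh : 0 < h) (x0 z0 : ℝ)
    (a b u v : ℝ → ℝ) (s0 δa δb δu δv : ℝ)
    (hrec : ∀ s, v s - u s = h * L (a s, b s, u s, v s))
    (hprev : u s0 - z0 = h * L (x0, a s0, z0, u s0))
    (hda : HasDerivAt a δa s0) (hdb : HasDerivAt b δb s0)
    (hdu : HasDerivAt u δu s0) (hdv : HasDerivAt v δv s0)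
    (hden0 : 1 - h * fderiv ℝ L (x0, a s0, z0, u s0) (0, 0, 0, 1) ≠ 0)
    (hden1 : 1 - h * fderiv ℝ L (a s0, b s0, u s0, v s0) (0, 0, 0, 1) ≠ 0)
    (hEL : fderiv ℝ L (a s0, b s0, u s0, v s0) (1, 0, 0, 0)
        + fderiv ℝ L (x0, a s0, z0, u s0) (0, 1, 0, 0)
          * (1 + h * fderiv ℝ L (a s0, b s0, u s0, v s0) (0, 0, 1, 0))
          / (1 - h * fderiv ℝ L (x0, a s0, z0, u s0) (0, 0, 0, 1)) = 0) :
    δv - (h * fderiv ℝ L (a s0, b s0, u s0, v s0) (0, 1, 0, 0)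
            / (1 - h * fderiv ℝ L (a s0, b s0, u s0, v s0) (0, 0, 0, 1))) * δb
      = ((1 + h * fderiv ℝ L (a s0, b s0, u s0, v s0) (0, 0, 1, 0))
            / (1 - h * fderiv ℝ L (a s0, b s0, u s0, v s0) (0, 0, 0, 1)))
        * (δu - (h * fderiv ℝ L (x0, a s0, z0, u s0) (0, 1, 0, 0)
            / (1 - h * fderiv ℝ L (x0, a s0, z0, u s0) (0, 0, 0, 1))) * δa) :=
  stmt7_general L hL h x0 z0 a b u v s0 δa δb δu δv hrec hda hdb hdu hdv hden1 hEL
end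

section
/- For the discrete Lagrangian L(x₀,x₁,z₀,z₁) = ½((x₁-x₀)/h)² - (V(x₀)+V(x₁))/2 - αz₀, the discrete generalized Euler-Lagrange equation is equivalent to (x_{j+1} - 2x_j + x_{j-1})/h² = -V'(x_j) - α((x_j - x_{j-1})/h - (h/2)V'(x_j)). -/
/-!
Since `L(x₀,x₁,z₀,z₁)` is a kinetic term in `x₁ - x₀`, a trapezoidal potential term and `-α z₀`,
its partial derivatives are `D₁L = -(x₁ - x₀)/h² - V'(x₀)/2`, `D₂L = (x₁ - x₀)/h² - V'(x₁)/2`,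
`D₃L = -α` and `D₄L = 0`. Substituting them, the left-hand side of the discrete generalized
Euler-Lagrange equation becomes exactly minus the residual (left side minus right side) of the
stated difference equation.
-/

noncomputable def L9 (V : ℝ → ℝ) (α h : ℝ) (q : ℝ × ℝ × ℝ × ℝ) : ℝ :=
  (1 / 2) * ((q.2.1 - q.1) / h) ^ 2 - (V q.1 + V q.2.1) / 2 - α * q.2.2.1

theorem fderiv_L9_apply {V : ℝ → ℝ} {α h a b : ℝ} (hVa : DifferentiableAt ℝ V a)
    (hVb : DifferentiableAt ℝ V b) (c d u v w s : ℝ) :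
    fderiv ℝ (L9 V α h) (a, b, c, d) (u, v, w, s)
      = (b - a) / h ^ 2 * (v - u) - (deriv V a * u + deriv V b * v) / 2 - α * w := by
  have hx := hasFDerivAt_fst (𝕜 := ℝ) (p := ((a, b, c, d) : ℝ × ℝ × ℝ × ℝ))
  have hy := (hasFDerivAt_snd (𝕜 := ℝ) (p := ((a, b, c, d) : ℝ × ℝ × ℝ × ℝ))).fst
  have hz := (hasFDerivAt_snd (𝕜 := ℝ) (p := ((a, b, c, d) : ℝ × ℝ × ℝ × ℝ))).snd.fst
  -- accepted up to defeq: `t / h` unfolds to `t * h⁻¹`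
  have hL : HasFDerivAt (L9 V α h) _ (a, b, c, d) :=
    (((((hy.sub hx).mul_const h⁻¹).pow 2).const_mul (1 / 2)).sub
      (((hVa.hasDerivAt.comp_hasFDerivAt _ hx).add
        (hVb.hasDerivAt.comp_hasFDerivAt _ hy)).mul_const 2⁻¹)).sub (hz.const_mul α)
  rw [hL.fderiv]
  simp only [one_div, Pi.sub_apply, Nat.add_one_sub_one, pow_one, nsmul_eq_mul, Nat.cast_ofNat,
    smul_add, sub_apply, smul_apply, ContinuousLinearMap.comp_apply, ContinuousLinearMap.coe_snd',
    ContinuousLinearMap.coe_fst', smul_eq_mul, add_apply]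
  ring

theorem stmt9_general (V : ℝ → ℝ) (hV : Differentiable ℝ V) (α h : ℝ)
    (xm x xp zm z zp : ℝ) :
    (fderiv ℝ (L9 V α h) (x, xp, z, zp) (1, 0, 0, 0)
        + fderiv ℝ (L9 V α h) (xm, x, zm, z) (0, 1, 0, 0)
          * (1 + h * fderiv ℝ (L9 V α h) (x, xp, z, zp) (0, 0, 1, 0))
          / (1 - h * fderiv ℝ (L9 V α h) (xm, x, zm, z) (0, 0, 0, 1)) = 0) ↔
      (xp - 2 * x + xm) / h ^ 2
        = -deriv V x - α * ((x - xm) / h - h / 2 * deriv V x) := by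
  simp only [fderiv_L9_apply (hV _) (hV _)]
  -- turns `h * D₂L` into the damping term `(x - xm) / h`; it holds at `h = 0` too (both sides `0`)
  have hh : h / h ^ 2 = h⁻¹ := by simp [sq]
  constructor <;> intro H <;> linear_combination -H - α * (x - xm) * hh

/-- for the discrete Lagrangian `L9`, the discrete generalized
Euler-Lagrange equation is equivalent to
`(x_{j+1} - 2x_j + x_{j-1})/h² = -V'(x_j) - α((x_j - x_{j-1})/h - (h/2)V'(x_j))`. -/
theorem stmt9 (V : ℝ → ℝ) (hV : Differentiable ℝ V) (α h : ℝ) (hh : 0 < h)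
    (xm x xp zm z zp : ℝ) :
    (fderiv ℝ (L9 V α h) (x, xp, z, zp) (1, 0, 0, 0)
        + fderiv ℝ (L9 V α h) (xm, x, zm, z) (0, 1, 0, 0)
          * (1 + h * fderiv ℝ (L9 V α h) (x, xp, z, zp) (0, 0, 1, 0))
          / (1 - h * fderiv ℝ (L9 V α h) (xm, x, zm, z) (0, 0, 0, 1)) = 0) ↔
      (xp - 2 * x + xm) / h ^ 2
        = -deriv V x - α * ((x - xm) / h - h / 2 * deriv V x) :=
  stmt9_general V hV α h xm x xp zm z zp
end

section
/- For the symmetric contact integrator of the damped system, on solutions of the discrete generalized Euler-Lagrange equation (1 + hα/2)(x_{j+1} - 2x_j + x_{j-1}) = -h²V'(x_j) - hα(x_j - x_{j-1}), the two momenta p_j⁻ = ((x_j - x_{j-1})/h - (h/2)V'(x_j))/(1 + hα/2) and p_j⁺ = ((x_{j+1} - x_j)/h + (h/2)V'(x_j))/(1 - hα/2) both equal (x_{j+1} - x_{j-1})/(2h). -/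
/-! The damping terms of the discrete Euler–Lagrange equation combine into a centred difference:
`(hα/2)(x_{j+1} - 2x_j + x_{j-1}) + hα(x_j - x_{j-1}) = (hα/2)(x_{j+1} - x_{j-1})`, so the equation
is the time-symmetric scheme `x_{j+1} - 2x_j + x_{j-1} + h²V'(x_j) + (hα/2)(x_{j+1} - x_{j-1}) = 0`.
Writing `x_j - x_{j-1}` and `x_{j+1} - x_j` as `(x_{j+1} - x_{j-1})/2 ∓ (x_{j+1} - 2x_j + x_{j-1})/2`,
each of `p_j⁻ = v` and `p_j⁺ = v`, with `v = (x_{j+1} - x_{j-1})/(2h)`, is this scheme divided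
by `2h`. -/

section DampedCentredScheme

variable {h α g xm x xp : ℝ}

theorem centred_scheme_of_discrete_euler_lagrange
    (hEL : (1 + h * α / 2) * (xp - 2 * x + xm) = -h ^ 2 * g - h * α * (x - xm)) :
    xp - 2 * x + xm + h ^ 2 * g + h * α / 2 * (xp - xm) = 0 := by
  linear_combination hEL

theorem backward_momentum_eq_central_difference (hh : h ≠ 0) (h1 : 1 + h * α / 2 ≠ 0)
    (hC : xp - 2 * x + xm + h ^ 2 * g + h * α / 2 * (xp - xm) = 0) :
    ((x - xm) / h - h / 2 * g) / (1 + h * α / 2) = (xp - xm) / (2 * h) := by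
  rw [div_eq_div_iff h1 (mul_ne_zero two_ne_zero hh)]
  field_simp
  linear_combination -2 * hC

theorem forward_momentum_eq_central_difference (hh : h ≠ 0) (h2 : 1 - h * α / 2 ≠ 0)
    (hC : xp - 2 * x + xm + h ^ 2 * g + h * α / 2 * (xp - xm) = 0) :
    ((xp - x) / h + h / 2 * g) / (1 - h * α / 2) = (xp - xm) / (2 * h) := by
  rw [div_eq_div_iff h2 (mul_ne_zero two_ne_zero hh)]
  field_simp
  linear_combination 2 * hC

end DampedCentredScheme

theorem stmt12_general (V : ℝ → ℝ) (α h : ℝ) (hh : 0 < h)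
    (h1 : 1 + h * α / 2 ≠ 0) (h2 : 1 - h * α / 2 ≠ 0) (xm x xp : ℝ)
    (hEL : (1 + h * α / 2) * (xp - 2 * x + xm)
      = -h ^ 2 * deriv V x - h * α * (x - xm)) :
    ((x - xm) / h - h / 2 * deriv V x) / (1 + h * α / 2) = (xp - xm) / (2 * h) ∧
    ((xp - x) / h + h / 2 * deriv V x) / (1 - h * α / 2) = (xp - xm) / (2 * h) := by
  have hC := centred_scheme_of_discrete_euler_lagrange hEL
  exact ⟨backward_momentum_eq_central_difference hh.ne' h1 hC,
    forward_momentum_eq_central_difference hh.ne' h2 hC⟩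

/-- on solutions of the discrete generalized Euler-Lagrange
equation of the symmetric contact integrator, the two discrete momenta
`p_j⁻` and `p_j⁺` both equal `(x_{j+1} - x_{j-1})/(2h)`. -/
theorem stmt12 (V : ℝ → ℝ) (hV : Differentiable ℝ V) (α h : ℝ) (hh : 0 < h)
    (h1 : 1 + h * α / 2 ≠ 0) (h2 : 1 - h * α / 2 ≠ 0) (xm x xp : ℝ)
    (hEL : (1 + h * α / 2) * (xp - 2 * x + xm)
      = -h ^ 2 * deriv V x - h * α * (x - xm)) :
    ((x - xm) / h - h / 2 * deriv V x) / (1 + h * α / 2) = (xp - xm) / (2 * h) ∧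
    ((xp - x) / h + h / 2 * deriv V x) / (1 - h * α / 2) = (xp - xm) / (2 * h) :=
  stmt12_general V α h hh h1 h2 xm x xp hEL
end

section
/- The explicit map x_j = x_{j-1} + h(1 - hα/2)p_{j-1} - (h²/2)V'(x_{j-1}), p_j = ((1 - hα/2)p_{j-1} - (h/2)(V'(x_j) + V'(x_{j-1})))/(1 + hα/2) generates sequences satisfying the difference equation (1 + hα/2)(x_{j+1} - 2x_j + x_{j-1}) = -h²V'(x_j) - hα(x_j - x_{j-1}). -/
/-!
Eliminating the momentum: the position update expresses `h (1 - hα/2) p_j` through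
`x_{j+1} - x_j` and `V'(x_j)`, and multiplying the momentum update by `h (1 - hα/2)` turns it
into a relation between three consecutive positions. Since `(1 + hα/2) + (1 - hα/2) = 2`, the
forces at `x_j` cancel and the ones at `x_{j+1}` add up to `h² V'(x_{j+1})`.
-/

theorem contactStep_second_difference {K : Type*} [Field K] [CharZero K] (h α : K) (x p F : ℕ → K) (j : ℕ)
    (hx : ∀ j, x (j + 1) = x j + h * (1 - h * α / 2) * p j - h ^ 2 / 2 * F j)
    (hp : (1 + h * α / 2) * p (j + 1) = (1 - h * α / 2) * p j - h / 2 * (F (j + 1) + F j)) :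
    (1 + h * α / 2) * (x (j + 1 + 1) - 2 * x (j + 1) + x j)
      = -h ^ 2 * F (j + 1) - h * α * (x (j + 1) - x j) := by
  linear_combination (1 + h * α / 2) * hx (j + 1) + h * (1 - h * α / 2) * hp
    - (1 - h * α / 2) * hx j

theorem stmt13_general (V : ℝ → ℝ) (α h : ℝ)
    (hden : 1 + h * α / 2 ≠ 0) (x p : ℕ → ℝ)
    (hx : ∀ j : ℕ, x (j + 1)
      = x j + h * (1 - h * α / 2) * p j - h ^ 2 / 2 * deriv V (x j))
    (hp : ∀ j : ℕ, p (j + 1)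
      = ((1 - h * α / 2) * p j - h / 2 * (deriv V (x (j + 1)) + deriv V (x j)))
        / (1 + h * α / 2)) :
    ∀ j : ℕ, 1 ≤ j →
      (1 + h * α / 2) * (x (j + 1) - 2 * x j + x (j - 1))
        = -h ^ 2 * deriv V (x j) - h * α * (x j - x (j - 1)) := by
  intro j hj
  obtain ⟨k, rfl⟩ := Nat.exists_eq_add_one.mpr hj
  have hp_cleared : (1 + h * α / 2) * p (k + 1)
      = (1 - h * α / 2) * p k - h / 2 * (deriv V (x (k + 1)) + deriv V (x k)) := by
    rw [hp k, mul_div_cancel₀ _ hden]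
  simpa using contactStep_second_difference h α x p (fun j => deriv V (x j)) k hx hp_cleared

/-- the explicit position-momentum update of the second-order
contact variational integrator generates sequences satisfying the second-order
difference equation `(1 + hα/2)(x_{j+1} - 2x_j + x_{j-1}) = -h²V'(x_j) - hα(x_j - x_{j-1})`. -/
theorem stmt13 (V : ℝ → ℝ) (hV : Differentiable ℝ V) (α h : ℝ) (hh : 0 < h)
    (hden : 1 + h * α / 2 ≠ 0) (x p : ℕ → ℝ)
    (hx : ∀ j : ℕ, x (j + 1)
      = x j + h * (1 - h * α / 2) * p j - h ^ 2 / 2 * deriv V (x j))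
    (hp : ∀ j : ℕ, p (j + 1)
      = ((1 - h * α / 2) * p j - h / 2 * (deriv V (x (j + 1)) + deriv V (x j)))
        / (1 + h * α / 2)) :
    ∀ j : ℕ, 1 ≤ j →
      (1 + h * α / 2) * (x (j + 1) - 2 * x j + x (j - 1))
        = -h ^ 2 * deriv V (x j) - h * α * (x j - x (j - 1)) :=
  stmt13_general V α h hden x p hx hp
end

section
/- Let S(x₀, x₁, z₀) generate a contact map via p₀ = -(∂S/∂z₀)⁻¹ ∂S/∂x₀, p₁ = ∂S/∂x₁, z₁ = S(x₀,x₁,z₀), and set L(x₀,x₁,z₀) = (S(x₀,x₁,z₀) - z₀)/h. Then any discrete curve (x_j, z_j) obtained by iterating this contact map satisfies z_{j+1} - z_j = h L(x_j, x_{j+1}, z_j) and the criticality condition ∂z_{j+1}/∂x_j = D₁S(x_j,x_{j+1},z_j) + D₃S(x_j,x_{j+1},z_j)·D₂S(x_{j-1},x_j,z_{j-1}) = 0. -/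
/-! The criticality condition is the compatibility of the two generating-function expressions
for the same momentum `p_j`: as `-D₁S/D₃S` at step `j` and as `D₂S` at step `j - 1`. -/

lemma add_mul_eq_zero_of_neg_div_eq {K : Type*} [Field K] {a b c : K} (hb : b ≠ 0)
    (h : -a / b = c) : a + b * c = 0 := by
  rw [← h, mul_div_cancel₀ _ hb, add_neg_cancel]

theorem stmt15_general (S : ℝ × ℝ × ℝ → ℝ)
    (h : ℝ) (hh : 0 < h)
    (hD3 : ∀ q : ℝ × ℝ × ℝ, fderiv ℝ S q (0, 0, 1) ≠ 0)
    (x z p : ℕ → ℝ)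
    (hz : ∀ j : ℕ, z (j + 1) = S (x j, x (j + 1), z j))
    (hp1 : ∀ j : ℕ, p j
      = -fderiv ℝ S (x j, x (j + 1), z j) (1, 0, 0)
        / fderiv ℝ S (x j, x (j + 1), z j) (0, 0, 1))
    (hp2 : ∀ j : ℕ, 1 ≤ j →
      p j = fderiv ℝ S (x (j - 1), x j, z (j - 1)) (0, 1, 0)) :
    (∀ j : ℕ, z (j + 1) - z j = h * ((S (x j, x (j + 1), z j) - z j) / h)) ∧
    (∀ j : ℕ, 1 ≤ j →
      fderiv ℝ S (x j, x (j + 1), z j) (1, 0, 0)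
        + fderiv ℝ S (x j, x (j + 1), z j) (0, 0, 1)
          * fderiv ℝ S (x (j - 1), x j, z (j - 1)) (0, 1, 0) = 0) := by
  refine ⟨fun j => ?_, fun j hj => ?_⟩
  · rw [mul_div_cancel₀ _ hh.ne', hz j]
  · exact add_mul_eq_zero_of_neg_div_eq (hD3 _) ((hp1 j).symm.trans (hp2 j hj))

/-- iterations of the contact map generated by
`S(x₀, x₁, z₀)` (via `p₀ = -(D₃S)⁻¹D₁S`, `p₁ = D₂S`, `z₁ = S`) solve the
discrete Herglotz variational principle for the discrete Lagrangian
`L(x₀,x₁,z₀) = (S(x₀,x₁,z₀) - z₀)/h`: they satisfy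
`z_{j+1} - z_j = h L(x_j, x_{j+1}, z_j)` and the criticality condition
`∂z_{j+1}/∂x_j = D₁S(x_j,x_{j+1},z_j) + D₃S(x_j,x_{j+1},z_j) D₂S(x_{j-1},x_j,z_{j-1}) = 0`. -/
theorem stmt15 (S : ℝ × ℝ × ℝ → ℝ) (hS : ContDiff ℝ 1 S)
    (h : ℝ) (hh : 0 < h)
    (hD3 : ∀ q : ℝ × ℝ × ℝ, fderiv ℝ S q (0, 0, 1) ≠ 0)
    (x z p : ℕ → ℝ)
    (hz : ∀ j : ℕ, z (j + 1) = S (x j, x (j + 1), z j))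
    (hp1 : ∀ j : ℕ, p j
      = -fderiv ℝ S (x j, x (j + 1), z j) (1, 0, 0)
        / fderiv ℝ S (x j, x (j + 1), z j) (0, 0, 1))
    (hp2 : ∀ j : ℕ, 1 ≤ j →
      p j = fderiv ℝ S (x (j - 1), x j, z (j - 1)) (0, 1, 0)) :
    (∀ j : ℕ, z (j + 1) - z j = h * ((S (x j, x (j + 1), z j) - z j) / h)) ∧
    (∀ j : ℕ, 1 ≤ j →
      fderiv ℝ S (x j, x (j + 1), z j) (1, 0, 0)
        + fderiv ℝ S (x j, x (j + 1), z j) (0, 0, 1)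
          * fderiv ℝ S (x (j - 1), x j, z (j - 1)) (0, 1, 0) = 0) :=
  stmt15_general S h hh hD3 x z p hz hp1 hp2
end

section
/- For the forced damped oscillator integrator, the explicit update x_j = x_{j-1} + h(1 - hα/2)p_{j-1} - (h²/2)V'(x_{j-1}) + (h²/2)f(t_{j-1}), p_j = ((1 - hα/2)p_{j-1} - (h/2)(V'(x_j)+V'(x_{j-1})) + (h/2)(f(t_j)+f(t_{j-1})))/(1 + hα/2) generates x satisfying (x_{j+1} - 2x_j + x_{j-1})/h² = -V'(x_j) + f(t_j) - (α/(1+hα/2))((x_j - x_{j-1})/h - (h/2)V'(x_j) + (h/2)f(t_j)). -/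
/-!
Write `G j = V'(x j) - f(t j)` for the total force. Multiplying the momentum update by `h` and
inserting the position update at step `j - 1` removes `p (j - 1)`, leaving the discrete Legendre
relation `(1 + hα/2) h p j = x j - x (j - 1) - (h²/2) G j`. Substituting it into the position
update at step `j` eliminates the momentum altogether, and what remains is the stated
second-order difference equation multiplied by `(1 + hα/2) h²`.
-/

namespace ContactIntegrator

variable {α h : ℝ} {x p G : ℕ → ℝ}
  (hx : ∀ j, x (j + 1) = x j + h * (1 - h * α / 2) * p j - h ^ 2 / 2 * G j)
  (hp : ∀ j, (1 + h * α / 2) * p (j + 1) = (1 - h * α / 2) * p j - h / 2 * (G (j + 1) + G j))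
include hx hp

theorem mul_momentum_eq (j : ℕ) :
    (1 + h * α / 2) * (h * p (j + 1)) = x (j + 1) - x j - h ^ 2 / 2 * G (j + 1) := by
  linear_combination h * hp j - hx j

theorem mul_second_difference_eq (j : ℕ) :
    (1 + h * α / 2) * (x (j + 2) - 2 * x (j + 1) + x j)
      = -h ^ 2 * G (j + 1) - h * α * (x (j + 1) - x j) := by
  linear_combination (1 + h * α / 2) * hx (j + 1)
    + (1 - h * α / 2) * mul_momentum_eq hx hp j

theorem second_difference_eq (hh : h ≠ 0) (hden : 1 + h * α / 2 ≠ 0) (j : ℕ) :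
    (x (j + 2) - 2 * x (j + 1) + x j) / h ^ 2
      = -G (j + 1) - α / (1 + h * α / 2) * ((x (j + 1) - x j) / h - h / 2 * G (j + 1)) := by
  have hden' : 2 + h * α ≠ 0 := fun h0 => hden (by linarith)
  field_simp
  linear_combination 2 * mul_second_difference_eq hx hp j

end ContactIntegrator

theorem stmt19_general (V f : ℝ → ℝ) (α h t0 : ℝ)
    (hh : 0 < h) (hden : 1 + h * α / 2 ≠ 0) (x p : ℕ → ℝ)
    (hx : ∀ j : ℕ, x (j + 1)
      = x j + h * (1 - h * α / 2) * p j - h ^ 2 / 2 * deriv V (x j)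
        + h ^ 2 / 2 * f (t0 + j * h))
    (hp : ∀ j : ℕ, p (j + 1)
      = ((1 - h * α / 2) * p j - h / 2 * (deriv V (x (j + 1)) + deriv V (x j))
          + h / 2 * (f (t0 + (j + 1) * h) + f (t0 + j * h)))
        / (1 + h * α / 2)) :
    ∀ j : ℕ, 1 ≤ j →
      (x (j + 1) - 2 * x j + x (j - 1)) / h ^ 2
        = -deriv V (x j) + f (t0 + j * h)
          - α / (1 + h * α / 2)
            * ((x j - x (j - 1)) / h - h / 2 * deriv V (x j)
               + h / 2 * f (t0 + j * h)) := by
  obtain ⟨G, hG⟩ : ∃ G : ℕ → ℝ, ∀ j, G j = deriv V (x j) - f (t0 + j * h) := ⟨_, fun _ => rfl⟩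
  have hxG : ∀ j, x (j + 1) = x j + h * (1 - h * α / 2) * p j - h ^ 2 / 2 * G j := fun j => by
    rw [hx j, hG]; ring
  have hpG : ∀ j, (1 + h * α / 2) * p (j + 1)
      = (1 - h * α / 2) * p j - h / 2 * (G (j + 1) + G j) := fun j => by
    rw [hp j, mul_div_cancel₀ _ hden, hG, hG]; push_cast; ring
  intro j hj
  obtain ⟨k, rfl⟩ := Nat.exists_eq_add_of_le' hj
  have key := ContactIntegrator.second_difference_eq hxG hpG hh.ne' hden k
  simp only [hG, Nat.add_sub_cancel] at key ⊢
  push_cast at key ⊢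
  linear_combination key

/-- the explicit position-momentum update of the time-dependent
contact variational integrator for the forced damped oscillator generates a
sequence `x` satisfying the stated second-order difference equation, where
`t_j = t₀ + jh`. -/
theorem stmt19 (V f : ℝ → ℝ) (hV : Differentiable ℝ V) (α h t0 : ℝ)
    (hh : 0 < h) (hden : 1 + h * α / 2 ≠ 0) (x p : ℕ → ℝ)
    (hx : ∀ j : ℕ, x (j + 1)
      = x j + h * (1 - h * α / 2) * p j - h ^ 2 / 2 * deriv V (x j)
        + h ^ 2 / 2 * f (t0 + j * h))
    (hp : ∀ j : ℕ, p (j + 1)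
      = ((1 - h * α / 2) * p j - h / 2 * (deriv V (x (j + 1)) + deriv V (x j))
          + h / 2 * (f (t0 + (j + 1) * h) + f (t0 + j * h)))
        / (1 + h * α / 2)) :
    ∀ j : ℕ, 1 ≤ j →
      (x (j + 1) - 2 * x j + x (j - 1)) / h ^ 2
        = -deriv V (x j) + f (t0 + j * h)
          - α / (1 + h * α / 2)
            * ((x j - x (j - 1)) / h - h / 2 * deriv V (x j)
               + h / 2 * f (t0 + j * h)) :=
  stmt19_general V f α h t0 hh hden x p hx hp
end
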